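/- arXiv:2111.05118 — 3 statements merged into one kernel-verified Lean document; each statement's English description precedes it below -/
import Mathlib

section
/- If a, b, c, m_a, m_b, m_c are positive integers satisfying 4m_a² = 2b² + 2c² − a², 4m_b² = 2a² + 2c² − b², 4m_c² = 2a² + 2b² − c², and at least one of m_a, m_b, m_c is divisible by 3, then all three of m_a, m_b, m_c are divisible by 3. -/
/-- If one median of an integer triangle with integer medians is divisible by 3,
    then all medians are divisible by 3. -/
theorem stmt_3 (a b c ma mb mc : ℤ)
    (hapos : 0 < a) (hbpos : 0 < b) (hcpos : 0 < c)
    (hmapos : 0 < ma) (hmbpos : 0 < mb) (hmcpos : 0 < mc)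
    (hma : 4*ma^2 = 2*b^2 + 2*c^2 - a^2)
    (hmb : 4*mb^2 = 2*a^2 + 2*c^2 - b^2)
    (hmc : 4*mc^2 = 2*a^2 + 2*b^2 - c^2)
    (h3 : 3 ∣ ma ∨ 3 ∣ mb ∨ 3 ∣ mc) :
    3 ∣ ma ∧ 3 ∣ mb ∧ 3 ∣ mc := by
  have key : ∀ x : ℤ, 3 ∣ x ↔ (x : ZMod 3) = 0 := fun x =>
    (ZMod.intCast_zmod_eq_zero_iff_dvd x 3).symm
  rw [key, key, key] at h3 ⊢
  have ha' : (4*(ma:ZMod 3)^2 : ZMod 3) = 2*(b:ZMod 3)^2 + 2*(c:ZMod 3)^2 - (a:ZMod 3)^2 := by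
    exact_mod_cast congrArg (Int.cast : ℤ → ZMod 3) hma
  have hb' : (4*(mb:ZMod 3)^2 : ZMod 3) = 2*(a:ZMod 3)^2 + 2*(c:ZMod 3)^2 - (b:ZMod 3)^2 := by
    exact_mod_cast congrArg (Int.cast : ℤ → ZMod 3) hmb
  have hc' : (4*(mc:ZMod 3)^2 : ZMod 3) = 2*(a:ZMod 3)^2 + 2*(b:ZMod 3)^2 - (c:ZMod 3)^2 := by
    exact_mod_cast congrArg (Int.cast : ℤ → ZMod 3) hmc
  revert ha' hb' hc' h3
  generalize (a : ZMod 3) = A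
  generalize (b : ZMod 3) = B
  generalize (c : ZMod 3) = C
  generalize (ma : ZMod 3) = MA
  generalize (mb : ZMod 3) = MB
  generalize (mc : ZMod 3) = MC
  revert A B C MA MB MC
  decide
end

section
/- If a, b, c, m_a, m_b, m_c are positive integers satisfying the median relations 4m_a² = 2b² + 2c² − a² (and cyclic analogues), then a, b, c are all even. -/
lemma even_sq4 (x : ℤ) (h : Even x) : ((x : ZMod 4))^2 = 0 := by
  obtain ⟨k, rfl⟩ := h
  have : ((k+k:ℤ) : ZMod 4)^2 = ((4:ℤ) : ZMod 4) * ((k^2 : ℤ) : ZMod 4) := by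
    push_cast; ring
  rw [this, show ((4:ℤ) : ZMod 4) = 0 by decide]
  ring

lemma odd_sq4 (x : ℤ) (h : Odd x) : ((x : ZMod 4))^2 = 1 := by
  obtain ⟨k, rfl⟩ := h
  have : ((2*k+1:ℤ) : ZMod 4)^2 = ((4:ℤ) : ZMod 4) * ((k^2+k : ℤ) : ZMod 4) + 1 := by
    push_cast; ring
  rw [this, show ((4:ℤ) : ZMod 4) = 0 by decide]
  ring

/-- Integer medians force even sides. -/
theorem stmt_4 (a b c ma mb mc : ℤ)
    (hapos : 0 < a) (hbpos : 0 < b) (hcpos : 0 < c)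
    (hmapos : 0 < ma) (hmbpos : 0 < mb) (hmcpos : 0 < mc)
    (hma : 4*ma^2 = 2*b^2 + 2*c^2 - a^2)
    (hmb : 4*mb^2 = 2*a^2 + 2*c^2 - b^2)
    (hmc : 4*mc^2 = 2*a^2 + 2*b^2 - c^2) :
    Even a ∧ Even b ∧ Even c := by
  have hsum : 4*(ma^2 + mb^2 + mc^2) = 3*(a^2 + b^2 + c^2) := by linarith
  have h4 : (3 : ZMod 4) * ((a:ZMod 4)^2 + (b:ZMod 4)^2 + (c:ZMod 4)^2) = 0 := by
    have := congrArg (fun z : ℤ => (z : ZMod 4)) hsum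
    push_cast at this
    rw [show ((4:ZMod 4)) = 0 by decide] at this
    simp at this
    linear_combination -this
  rcases Int.even_or_odd a with ha | ha <;>
  rcases Int.even_or_odd b with hb | hb <;>
  rcases Int.even_or_odd c with hc | hc
  · exact ⟨ha, hb, hc⟩
  all_goals {
    first
      | (rw [even_sq4 a ha] at h4) | (rw [odd_sq4 a ha] at h4)
    first
      | (rw [even_sq4 b hb] at h4) | (rw [odd_sq4 b hb] at h4)
    first
      | (rw [even_sq4 c hc] at h4) | (rw [odd_sq4 c hc] at h4)
    exact absurd h4 (by decide)
  }
end

section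
/- For a triangle with sides a, b, c, medians m_a, m_b, m_c and area S, one has 9S² = (m_a + m_b + (3/2)c)(m_a + m_b − (3/2)c)(m_a + (3/2)c − m_b)((3/2)c + m_b − m_a). -/
/-- 9S² = (m_a+m_b+(3/2)c)(m_a+m_b−(3/2)c)(m_a+(3/2)c−m_b)((3/2)c+m_b−m_a). -/
theorem stmt_11 (a b c ma mb S : ℝ)
    (hma : 4*ma^2 = 2*b^2 + 2*c^2 - a^2)
    (hmb : 4*mb^2 = 2*a^2 + 2*c^2 - b^2)
    (hS : 16*S^2 = (a + b + c) * (a + b - c) * (a + c - b) * (b + c - a)) :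
    9*S^2 = (ma + mb + (3/2)*c) * (ma + mb - (3/2)*c) *
      (ma + (3/2)*c - mb) * ((3/2)*c + mb - ma) := by
  linear_combination (9/16)*hS - ma^2*hmb - ((2*a^2+2*c^2-b^2)/4)*hma +
    ((hma+hmb)/4)*(ma^2+mb^2+((2*b^2+2*c^2-a^2)+(2*a^2+2*c^2-b^2))/4-(9/2)*c^2)
end
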